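/- Let G be the edge-coloured graph with vertex set X ∪ Y where |X| = δ, X induces a rainbow complete graph, Y is independent, and for each x_i ∈ X all edges from x_i to Y receive a single new colour c_i (distinct for different i). Then every properly coloured cycle C in G satisfies |X ∩ V(C)| ≥ 2|Y ∩ V(C)|. -/

import Mathlib

open SimpleGraph

/-- A list of vertices forms a properly coloured walk: consecutive vertices are
adjacent and consecutive edges receive different colours. -/
def IsPCWalk {V : Type*} (G : SimpleGraph V) (c : V → V → ℕ) : List V → Prop
  | a :: b :: d :: rest => G.Adj a b ∧ c a b ≠ c b d ∧ IsPCWalk G c (b :: d :: rest)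
  | [a, b] => G.Adj a b
  | _ => True

/-- A properly coloured path: distinct vertices forming a properly coloured walk. -/
def IsPCPath {V : Type*} (G : SimpleGraph V) (c : V → V → ℕ) (l : List V) : Prop :=
  l.Nodup ∧ IsPCWalk G c l

/-- A properly coloured cycle, given as a list of (distinct) vertices of length ≥ 3;
closing the cycle by appending the first two vertices ensures all adjacencies and
colour conditions, including around the wrap-around vertex. -/
def IsPCCycle {V : Type*} (G : SimpleGraph V) (c : V → V → ℕ) (l : List V) : Prop :=
  3 ≤ l.length ∧ l.Nodup ∧ IsPCWalk G c (l ++ l.take 2)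

/-- The colour degree of `v`: the number of distinct colours on edges at `v`. -/
noncomputable def colourDeg {V : Type*} (G : SimpleGraph V) (c : V → V → ℕ) (v : V) : ℕ :=
  ((c v) '' {w | G.Adj v w}).ncard

/-- `colourDeg1 G c v a`: the number of edges at `v` whose colour differs from `a`.
`δ₁^c(G) ≥ k` is then `∀ v a, k ≤ colourDeg1 G c v a`. -/
noncomputable def colourDeg1 {V : Type*} (G : SimpleGraph V) (c : V → V → ℕ) (v : V) (a : ℕ) : ℕ :=
  {w | G.Adj v w ∧ c v w ≠ a}.ncard


/-! Since `Y` is independent, both cycle-neighbours of a vertex of `Y` lie in `X`. Two vertices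
of `Y` at distance two on the cycle are impossible: the vertex `x` between them would see the
colour `col x` on both of its cycle edges. Hence the successors and the predecessors of the
`Y`-vertices of the cycle are `2 |Y ∩ V(C)|` distinct vertices of `X`. -/

open Finset

theorem List.getElem_append_take_self {α : Type*} (l : List α) (k : ℕ) {j : ℕ}
    (hj : j < (l ++ l.take k).length) :
    (l ++ l.take k)[j] = l[j % l.length]'(Nat.mod_lt _ (by simp at hj; omega)) := by
  simp only [List.length_append, List.length_take] at hj
  rcases Nat.lt_or_ge j l.length with hlt | hge
  · simp [List.getElem_append_left hlt, Nat.mod_eq_of_lt hlt]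
  · have : j % l.length = j - l.length := by
      rw [Nat.mod_eq_sub_mod hge, Nat.mod_eq_of_lt (by omega)]
    simp [List.getElem_append_right hge, this]

theorem List.Nodup.card_toFinset_inter {α : Type*} [DecidableEq α] {l : List α} (hl : l.Nodup)
    (s : Finset α) : #(l.toFinset ∩ s) = #{i : Fin l.length | l[i] ∈ s} := by
  have hinj : Function.Injective (fun i : Fin l.length => l[i]) :=
    List.nodup_iff_injective_get.mp hl
  rw [← card_image_of_injective _ hinj]
  congr 1
  ext v
  simp only [mem_inter, List.mem_toFinset, List.mem_iff_getElem, Fin.getElem_fin, mem_image,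
    Finset.mem_filter, mem_univ, true_and, Fin.exists_iff]
  constructor
  · rintro ⟨⟨i, hi, rfl⟩, hs⟩
    exact ⟨i, hi, hs, rfl⟩
  · rintro ⟨i, hi, hs, rfl⟩
    exact ⟨⟨i, hi, rfl⟩, hs⟩

theorem two_mul_card_filter_le_of_perm {α : Type*} [Fintype α] [DecidableEq α]
    (σ : Equiv.Perm α) {p q : α → Prop} [DecidablePred p] [DecidablePred q]
    (hsucc : ∀ a, p a → q (σ a)) (hpred : ∀ a, p (σ a) → q a)
    (hgap : ∀ a, p a → ¬ p (σ (σ a))) :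
    2 * #{a | p a} ≤ #{a | q a} := by
  set S : Finset α := {a | p a}
  have hdisj : Disjoint (S.image σ) (S.image σ.symm) := by
    simp only [S, Finset.disjoint_left, mem_image, mem_filter, mem_univ, true_and]
    rintro _ ⟨a, ha, rfl⟩ ⟨b, hb, hab⟩
    exact hgap a ha (by simpa [← hab] using hb)
  calc 2 * #S
      = #(S.image σ ∪ S.image σ.symm) := by
        rw [card_union_of_disjoint hdisj, card_image_of_injective _ σ.injective,
          card_image_of_injective _ σ.symm.injective, two_mul]
    _ ≤ #{a | q a} := by
        refine card_le_card fun b hb => ?_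
        simp only [S, mem_union, mem_image, mem_filter, mem_univ, true_and] at hb ⊢
        rcases hb with ⟨a, ha, rfl⟩ | ⟨a, ha, rfl⟩
        · exact hsucc a ha
        · exact hpred _ (by simpa using ha)

section Cycle

variable {V : Type*} {G : SimpleGraph V} {c : V → V → ℕ}

theorem IsPCWalk.adj_getElem : ∀ {m : List V}, IsPCWalk G c m →
    ∀ {i : ℕ} (h : i + 1 < m.length), G.Adj m[i] m[i + 1]
  | [_, _], hw, 0, _ => hw
  | _ :: _ :: _ :: _, hw, 0, _ => hw.1
  | _ :: b :: d :: rest, hw, i + 1, h =>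
    adj_getElem (m := b :: d :: rest) hw.2.2 (i := i) (by simpa using h)

theorem IsPCWalk.colour_getElem_ne : ∀ {m : List V}, IsPCWalk G c m →
    ∀ {i : ℕ} (h : i + 2 < m.length), c m[i] m[i + 1] ≠ c m[i + 1] m[i + 2]
  | _ :: _ :: _ :: _, hw, 0, _ => hw.2.1
  | _ :: b :: d :: rest, hw, i + 1, h =>
    colour_getElem_ne (m := b :: d :: rest) hw.2.2 (i := i) (by simpa using h)

variable {l : List V} [NeZero l.length]

theorem IsPCCycle.adj_getElem_add_one (hl : IsPCCycle G c l) (i : Fin l.length) :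
    G.Adj l[i] l[i + 1] := by
  have h := hl.2.2.adj_getElem (i := i) (by simp; omega)
  simpa [List.getElem_append_take_self, Fin.val_add, Nat.mod_eq_of_lt i.isLt] using h

theorem IsPCCycle.colour_ne (hl : IsPCCycle G c l) (i : Fin l.length) :
    c l[i] l[i + 1] ≠ c l[i + 1] l[i + 1 + 1] := by
  have h := hl.2.2.colour_getElem_ne (i := i) (by have := hl.1; simp; omega)
  simpa [List.getElem_append_take_self, Fin.val_add, Nat.mod_eq_of_lt i.isLt, add_assoc] using h

end Cycle

theorem stmt4_general {V : Type*} [DecidableEq V] (G : SimpleGraph V) (c : V → V → ℕ)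
    (X Y : Finset V) (col : V → ℕ)
    (hc : ∀ u v, c u v = c v u)
    (hcover : ∀ v : V, v ∈ X ∨ v ∈ Y)
    (hYindep : ∀ y ∈ Y, ∀ y' ∈ Y, ¬ G.Adj y y')
    (hcXY : ∀ x ∈ X, ∀ y ∈ Y, c x y = col x) :
    ∀ l : List V, IsPCCycle G c l →
      2 * (l.toFinset ∩ Y).card ≤ (l.toFinset ∩ X).card := by
  intro l hl
  have : NeZero l.length := ⟨by have := hl.1; omega⟩
  have mem_X_of_adj {u v : V} (huv : G.Adj u v) (hu : u ∈ Y) : v ∈ X :=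
    (hcover v).resolve_right (hYindep u hu v · huv)
  rw [hl.2.1.card_toFinset_inter, hl.2.1.card_toFinset_inter]
  refine two_mul_card_filter_le_of_perm (Equiv.addRight 1) (fun i hi => ?_) (fun i hi => ?_) ?_
  · exact mem_X_of_adj (hl.adj_getElem_add_one i) hi
  · exact mem_X_of_adj (hl.adj_getElem_add_one i).symm hi
  · intro i hi hi'
    have hx := mem_X_of_adj (hl.adj_getElem_add_one i) hi
    refine hl.colour_ne i ?_
    simp only [Equiv.coe_addRight] at hi'
    rw [hc, hcXY _ hx _ hi, hcXY _ hx _ hi']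

/-- In the extremal example (`X` inducing a rainbow complete graph, `Y`
independent, and all edges from `x ∈ X` to `Y` getting a single new colour `col x`),
every properly coloured cycle `C` satisfies `|X ∩ V(C)| ≥ 2 |Y ∩ V(C)|`. -/
theorem stmt4 {V : Type*} [Fintype V] [DecidableEq V] (G : SimpleGraph V) (c : V → V → ℕ)
    (X Y : Finset V) (col : V → ℕ)
    (hc : ∀ u v, c u v = c v u)
    (hdisj : Disjoint X Y)
    (hcover : ∀ v : V, v ∈ X ∨ v ∈ Y)
    (hXcomplete : ∀ x ∈ X, ∀ x' ∈ X, x ≠ x' → G.Adj x x')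
    (hYindep : ∀ y ∈ Y, ∀ y' ∈ Y, ¬ G.Adj y y')
    (hXY : ∀ x ∈ X, ∀ y ∈ Y, G.Adj x y)
    (hcXY : ∀ x ∈ X, ∀ y ∈ Y, c x y = col x)
    (hcolinj : ∀ x ∈ X, ∀ x' ∈ X, col x = col x' → x = x')
    (hrainbow : ∀ x ∈ X, ∀ x' ∈ X, ∀ u ∈ X, ∀ u' ∈ X, x ≠ x' → u ≠ u' →
      ¬(x = u ∧ x' = u') → ¬(x = u' ∧ x' = u) → c x x' ≠ c u u')
    (hnew : ∀ x ∈ X, ∀ u ∈ X, ∀ u' ∈ X, u ≠ u' → col x ≠ c u u') :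
    ∀ l : List V, IsPCCycle G c l →
      2 * (l.toFinset ∩ Y).card ≤ (l.toFinset ∩ X).card :=
  stmt4_general G c X Y col hc hcover hYindep hcXY
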